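/- Let T be a homeomorphism of a totally disconnected compact metrizable space X, K a field, and rk a Sylvester matrix rank function on the algebraic crossed product A = C_K(X) ⋊_T ℤ. Then the assignment U ↦ rk(χ_U) on clopen subsets U of X extends uniquely to a T-invariant Borel probability measure on X. -/

import Mathlib

/-- A Sylvester matrix rank function on a unital ring `R`: a nonnegative real-valued
function on all (rectangular) matrices over `R` satisfying `rk 0 = 0`, `rk 1 = 1`,
`rk (AB) ≤ min (rk A) (rk B)`, additivity on block-diagonal matrices, and
superadditivity on block upper-triangular matrices. -/
structure SylvesterRank (R : Type*) [Ring R] where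
  rk : ∀ {n m : ℕ}, Matrix (Fin n) (Fin m) R → ℝ
  rk_nonneg : ∀ {n m : ℕ} (M : Matrix (Fin n) (Fin m) R), 0 ≤ rk M
  rk_zero : ∀ {n m : ℕ}, rk (0 : Matrix (Fin n) (Fin m) R) = 0
  rk_one : rk (1 : Matrix (Fin 1) (Fin 1) R) = 1
  rk_mul_le_left : ∀ {n m k : ℕ} (A : Matrix (Fin n) (Fin m) R) (B : Matrix (Fin m) (Fin k) R),
    rk (A * B) ≤ rk A
  rk_mul_le_right : ∀ {n m k : ℕ} (A : Matrix (Fin n) (Fin m) R) (B : Matrix (Fin m) (Fin k) R),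
    rk (A * B) ≤ rk B
  rk_diag : ∀ {n m p q : ℕ} (A : Matrix (Fin n) (Fin m) R) (B : Matrix (Fin p) (Fin q) R),
    rk ((Matrix.fromBlocks A 0 0 B).submatrix finSumFinEquiv.symm finSumFinEquiv.symm)
      = rk A + rk B
  rk_triangular : ∀ {n m p q : ℕ} (A : Matrix (Fin n) (Fin m) R) (C : Matrix (Fin n) (Fin q) R)
    (B : Matrix (Fin p) (Fin q) R),
    rk A + rk B ≤ rk ((Matrix.fromBlocks A C 0 B).submatrix finSumFinEquiv.symm finSumFinEquiv.symm)

/-- The rank of a ring element, viewed as a `1 × 1` matrix. -/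
def SylvesterRank.rk1 {R : Type*} [Ring R] (P : SylvesterRank R) (a : R) : ℝ :=
  P.rk (Matrix.of fun (_ _ : Fin 1) => a)


open MeasureTheory

/-!
Characteristic functions of clopen sets are idempotents, orthogonal for disjoint sets, so the
block axioms of a Sylvester rank make `U ↦ rk (χ_U)` finitely additive on the ring of clopen
sets, and conjugation by the unit `t` makes it `T`-invariant. In a compact space a countable
clopen cover of a clopen set has a finite subcover, so this content is σ-subadditive and
Carathéodory's construction extends it to a Borel measure. Clopen sets form a π-system
generating the Borel σ-algebra, which gives uniqueness and carries `T`-invariance from clopen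
sets to all Borel sets.
-/

open Set TopologicalSpace
open scoped ENNReal

lemma Matrix.of_const_mul_of_const_fin_one {R : Type*} [Ring R] (a b : R) :
    (Matrix.of fun (_ _ : Fin 1) => a) * (Matrix.of fun (_ _ : Fin 1) => b) =
      Matrix.of fun _ _ => a * b := by
  ext; simp [Matrix.mul_apply]

namespace SylvesterRank

variable {R : Type*} [Ring R] (P : SylvesterRank R)

lemma rk1_nonneg (a : R) : 0 ≤ P.rk1 a := P.rk_nonneg _

lemma rk1_mul_le_left (a b : R) : P.rk1 (a * b) ≤ P.rk1 a := by
  rw [rk1, ← Matrix.of_const_mul_of_const_fin_one]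
  exact P.rk_mul_le_left _ _

lemma rk1_mul_le_right (a b : R) : P.rk1 (a * b) ≤ P.rk1 b := by
  rw [rk1, ← Matrix.of_const_mul_of_const_fin_one]
  exact P.rk_mul_le_right _ _

lemma rk1_zero : P.rk1 (0 : R) = 0 :=
  P.rk_zero

lemma rk1_one : P.rk1 (1 : R) = 1 := by
  have : (Matrix.of fun (_ _ : Fin 1) => (1 : R)) = 1 := by
    ext i j; rw [Subsingleton.elim i j]; simp
  rw [rk1, this, P.rk_one]

lemma rk1_units_conj (u : Rˣ) (a : R) : P.rk1 (u * a * ↑u⁻¹) = P.rk1 a := by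
  refine le_antisymm ((P.rk1_mul_le_left _ _).trans (P.rk1_mul_le_right _ _)) ?_
  calc P.rk1 a = P.rk1 (↑u⁻¹ * (u * a * ↑u⁻¹) * u) := by simp [mul_assoc]
    _ ≤ P.rk1 (u * a * ↑u⁻¹) := (P.rk1_mul_le_left _ _).trans (P.rk1_mul_le_right _ _)

lemma rk_diag_two (e f : R) : P.rk !![e, 0; 0, f] = P.rk1 e + P.rk1 f := by
  rw [rk1, rk1, ← P.rk_diag]
  congr 1
  ext i j
  fin_cases i <;> fin_cases j <;> rfl

lemma rk1_add_of_mul_eq_zero {e f : R} (he : IsIdempotentElem e) (hf : IsIdempotentElem f)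
    (hef : e * f = 0) (hfe : f * e = 0) : P.rk1 (e + f) = P.rk1 e + P.rk1 f := by
  rw [← rk_diag_two]
  apply le_antisymm
  · calc P.rk1 (e + f) = P.rk (!![1, 1] * !![e, 0; 0, f] * !![1; 1]) := by
          rw [rk1]; congr 1; ext i j; fin_cases i; fin_cases j; simp
      _ ≤ P.rk !![e, 0; 0, f] := (P.rk_mul_le_left _ _).trans (P.rk_mul_le_right _ _)
  · calc P.rk !![e, 0; 0, f] = P.rk (!![e; f] * Matrix.of (fun _ _ => e + f) * !![e, f]) := by
          congr 1
          ext i j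
          fin_cases i <;> fin_cases j <;> simp [Matrix.mul_apply, mul_add, he.eq, hf.eq, hef, hfe]
      _ ≤ P.rk1 (e + f) := (P.rk_mul_le_left _ _).trans (P.rk_mul_le_right _ _)

end SylvesterRank

namespace LocallyConstant

variable {X : Type*} [TopologicalSpace X] (Y : Type*) {U V : Set X}

lemma charFn_union_of_disjoint [NonAssocSemiring Y] (hU : IsClopen U) (hV : IsClopen V)
    (hUV : Disjoint U V) : charFn Y (hU.union hV) = charFn Y hU + charFn Y hV :=
  coe_injective (indicator_union_of_disjoint hUV _)

lemma charFn_empty [MulZeroOneClass Y] : charFn Y (isClopen_empty : IsClopen (∅ : Set X)) = 0 :=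
  coe_injective (indicator_empty _)

lemma charFn_univ [MulZeroOneClass Y] : charFn Y (isClopen_univ : IsClopen (univ : Set X)) = 1 :=
  coe_injective (indicator_univ _)

lemma isIdempotentElem_charFn [MulZeroOneClass Y] (hU : IsClopen U) :
    IsIdempotentElem (charFn Y hU) := by
  ext x
  by_cases hx : x ∈ U <;> simp [coe_charFn, hx]

lemma charFn_mul_charFn_of_disjoint [MulZeroOneClass Y] (hU : IsClopen U) (hV : IsClopen V)
    (hUV : Disjoint U V) : charFn Y hU * charFn Y hV = 0 := by
  ext x
  by_cases hx : x ∈ U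
  · simp [coe_charFn, hx, hUV.notMem_of_mem_left hx]
  · simp [coe_charFn, hx]

lemma comap_charFn {Z : Type*} [TopologicalSpace Z] [MulZeroOneClass Y] (f : C(Z, X))
    (hU : IsClopen U) : (charFn Y hU).comap f = charFn Y (hU.preimage f.continuous) :=
  rfl

end LocallyConstant

section Clopen

variable (X : Type*) [TopologicalSpace X]

lemma isSetRing_isClopen : IsSetRing {s : Set X | IsClopen s} :=
  ⟨isClopen_empty, fun _ _ hs ht => hs.union ht, fun _ _ hs ht => hs.diff ht⟩

variable {X}

lemma MeasureTheory.AddContent.isSigmaSubadditive_of_isClopen [CompactSpace X]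
    (m : AddContent ℝ≥0∞ {s : Set X | IsClopen s}) : m.IsSigmaSubadditive := by
  intro f hf hU
  obtain ⟨t, ht⟩ :=
    hU.isClosed.isCompact.elim_finite_subcover f (fun i => (hf i).isOpen) subset_rfl
  calc m (⋃ i, f i) ≤ m (⋃ i ∈ t, f i) :=
        addContent_mono (isSetRing_isClopen X).isSetSemiring hU
          ((isSetRing_isClopen X).biUnion_mem t fun i _ => hf i) ht
    _ ≤ ∑ i ∈ t, m (f i) := addContent_biUnion_le (isSetRing_isClopen X) fun i _ => hf i
    _ ≤ ∑' i, m (f i) := ENNReal.sum_le_tsum t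

variable [CompactSpace X] [T2Space X] [TotallyDisconnectedSpace X] [SecondCountableTopology X]
  [MeasurableSpace X] [BorelSpace X]

lemma borel_eq_generateFrom_isClopen :
    ‹MeasurableSpace X› = MeasurableSpace.generateFrom {s : Set X | IsClopen s} := by
  rw [BorelSpace.measurable_eq (α := X)]
  exact isTopologicalBasis_isClopen.borel_eq_generateFrom

lemma MeasureTheory.AddContent.exists_measure_eq_of_isClopen
    (m : AddContent ℝ≥0∞ {s : Set X | IsClopen s}) :
    ∃ μ : Measure X, ∀ U, IsClopen U → μ U = m U :=
  ⟨m.measure (isSetRing_isClopen X).isSetSemiring borel_eq_generateFrom_isClopen.le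
      m.isSigmaSubadditive_of_isClopen,
    fun _ hU => m.measure_eq _ borel_eq_generateFrom_isClopen _ hU⟩

lemma MeasureTheory.Measure.ext_of_isClopen {μ ν : Measure X} [IsFiniteMeasure μ]
    (h : ∀ U, IsClopen U → μ U = ν U) : μ = ν :=
  ext_of_generate_finite _ borel_eq_generateFrom_isClopen
    (fun _ hs _ ht _ => hs.inter ht) h (h univ isClopen_univ)

lemma MeasureTheory.Measure.measure_image_eq_of_isClopen (T : X ≃ₜ X) (μ : Measure X)
    [IsFiniteMeasure μ] (h : ∀ U, IsClopen U → μ (T '' U) = μ U) (B : Set X) :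
    μ (T '' B) = μ B := by
  have hmap : μ.map T.symm.toMeasurableEquiv = μ := by
    refine ext_of_isClopen fun U hU => ?_
    rw [MeasurableEquiv.map_apply, Homeomorph.toMeasurableEquiv_coe,
      ← T.image_eq_preimage_symm, h U hU]
  rw [T.image_eq_preimage_symm, ← Homeomorph.toMeasurableEquiv_coe, ← MeasurableEquiv.map_apply,
    hmap]

end Clopen

lemma Homeomorph.isClopen_image {X Y : Type*} [TopologicalSpace X] [TopologicalSpace Y]
    (h : X ≃ₜ Y) {s : Set X} : IsClopen (h '' s) ↔ IsClopen s := by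
  simp only [IsClopen, h.isOpen_image, h.isClosed_image]

namespace SylvesterRank

open LocallyConstant

variable {X : Type*} [TopologicalSpace X] {K : Type*} [Ring K] {A : Type*} [Ring A]
  (P : SylvesterRank A) (ι : LocallyConstant X K →+* A)

lemma rk1_charFn_union_of_disjoint {U V : Set X} (hU : IsClopen U) (hV : IsClopen V)
    (hUV : Disjoint U V) :
    P.rk1 (ι (charFn K (hU.union hV))) = P.rk1 (ι (charFn K hU)) + P.rk1 (ι (charFn K hV)) := by
  rw [charFn_union_of_disjoint K hU hV hUV, map_add]
  refine P.rk1_add_of_mul_eq_zero ((isIdempotentElem_charFn K hU).map ι)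
    ((isIdempotentElem_charFn K hV).map ι) ?_ ?_ <;>
  rw [← map_mul, charFn_mul_charFn_of_disjoint, map_zero]
  exacts [hUV, hUV.symm]

open Classical in
noncomputable def clopenContent : MeasureTheory.AddContent ℝ≥0∞ {s : Set X | IsClopen s} :=
  (isSetRing_isClopen X).addContent_of_union
    (fun U => if hU : IsClopen U then ENNReal.ofReal (P.rk1 (ι (charFn K hU))) else 0)
    (by simp [charFn_empty, P.rk1_zero])
    (fun {U V} (hU : IsClopen U) (hV : IsClopen V) hUV => by
      rw [dif_pos hU, dif_pos hV, dif_pos (hU.union hV),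
        P.rk1_charFn_union_of_disjoint ι hU hV hUV]
      exact ENNReal.ofReal_add (P.rk1_nonneg _) (P.rk1_nonneg _))

lemma clopenContent_apply {U : Set X} (hU : IsClopen U) :
    P.clopenContent ι U = ENNReal.ofReal (P.rk1 (ι (charFn K hU))) :=
  dif_pos hU

lemma clopenContent_univ : P.clopenContent ι univ = 1 := by
  rw [clopenContent_apply P ι isClopen_univ, charFn_univ, map_one, P.rk1_one, ENNReal.ofReal_one]

lemma clopenContent_image_of_conj (T : X ≃ₜ X) (t : Aˣ)
    (hrel : ∀ f : LocallyConstant X K,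
      (t : A) * ι f * ((t⁻¹ : Aˣ) : A) = ι (f.comap (T.symm : C(X, X))))
    {U : Set X} (hU : IsClopen U) : P.clopenContent ι (T '' U) = P.clopenContent ι U := by
  have hTU : IsClopen (T '' U) := T.isClopen_image.mpr hU
  rw [clopenContent_apply P ι hU, clopenContent_apply P ι hTU,
    ← P.rk1_units_conj t (ι (charFn K hU)), hrel, comap_charFn]
  congr 4
  exact T.image_eq_preimage_symm U

end SylvesterRank

/-- let `T` be a homeomorphism of a totally disconnected compact metrizable
space `X`, `K` a field, and `rk` a Sylvester matrix rank function on the algebraic crossed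
product `A = C_K(X) ⋊_T ℤ` (presented by a ring homomorphism `ι : C_K(X) → A` and a unit
`t` with `t ι(f) t⁻¹ = ι(f ∘ T⁻¹)`).  Then `U ↦ rk (χ_U)` on clopen subsets extends
uniquely to a `T`-invariant Borel probability measure on `X`. -/
theorem stmt10 {X : Type*} [TopologicalSpace X] [CompactSpace X]
    [TopologicalSpace.MetrizableSpace X] [TotallyDisconnectedSpace X]
    [MeasurableSpace X] [BorelSpace X]
    {K : Type*} [Field K] (T : X ≃ₜ X)
    {A : Type*} [Ring A] (ι : LocallyConstant X K →+* A) (t : Aˣ)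
    (hrel : ∀ f : LocallyConstant X K,
      (t : A) * ι f * ((t⁻¹ : Aˣ) : A) = ι (f.comap (T.symm : C(X, X))))
    (P : SylvesterRank A) :
    ∃! μ : Measure X, IsProbabilityMeasure μ ∧
      (∀ B : Set X, MeasurableSet B → μ (⇑T '' B) = μ B) ∧
      (∀ (U : Set X) (hU : IsClopen U),
        μ U = ENNReal.ofReal (P.rk1 (ι (LocallyConstant.charFn K hU)))) := by
  have : SecondCountableTopology X := by
    let := TopologicalSpace.metrizableSpaceMetric X
    infer_instance
  obtain ⟨μ, hμ⟩ := (P.clopenContent ι).exists_measure_eq_of_isClopen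
  have hμ_prob : IsProbabilityMeasure μ := ⟨by rw [hμ univ isClopen_univ, P.clopenContent_univ ι]⟩
  refine ⟨μ, ⟨hμ_prob, fun B _ => μ.measure_image_eq_of_isClopen T (fun U hU => ?_) B,
    fun U hU => by rw [hμ U hU, P.clopenContent_apply ι hU]⟩, ?_⟩
  · rw [hμ U hU, hμ _ (T.isClopen_image.mpr hU), P.clopenContent_image_of_conj ι T t hrel hU]
  · rintro ν ⟨hν, -, hνU⟩
    exact Measure.ext_of_isClopen fun U hU => by
      rw [hνU U hU, hμ U hU, P.clopenContent_apply ι hU]
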